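/- arXiv:1804.00281 — 3 statements merged into one kernel-verified Lean document; each statement's English description precedes it below -/
import Mathlib

section
/- There exists an absolute constant C > 0 such that for all D ≥ 1, all σ with 0 < σ ≤ 1, and all x ∈ [-1,1]^D, if g is a random vector in ℝ^D whose coordinates are independent centered Gaussians of variance σ², then √D / E[‖x + g‖₂] ≤ C/σ. Consequently the smoothed complexity max_{x ∈ [-1,1]^D} √D / E[‖x+g‖₂] of amplitude encoding via fixed-point amplitude amplification is O(1/σ), independent of the dimension D. -/
/-!
Cauchy–Schwarz gives `‖y‖₂ ≥ ‖y‖₁ / √D`, so `E‖x + g‖₂ ≥ (1/√D) ∑ᵢ E|xᵢ + gᵢ|`. Each `gᵢ` is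
symmetric, and `2|t| ≤ |a + t| + |a - t|` then shows that shifting it can only increase its
mean absolute value: `E|xᵢ + gᵢ| ≥ E|gᵢ| = σ E|Z|` with `Z ~ N(0,1)`. Hence
`E‖x + g‖₂ ≥ √D σ E|Z|`, and `C = 1 / E|Z|` works.
-/

open MeasureTheory ProbabilityTheory

/-- The `D`-fold product of the centered one-dimensional Gaussian measure of variance `σ²`:
the distribution of a random vector in `ℝ^D` with independent `N(0,σ²)` coordinates. -/
noncomputable def gaussPi (D : ℕ) (σ : ℝ) : Measure (Fin D → ℝ) :=
  Measure.pi fun _ => gaussianReal 0 ⟨σ ^ 2, sq_nonneg σ⟩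

open scoped NNReal

instance isNegInvariant_gaussianReal_zero (v : ℝ≥0) : (gaussianReal 0 v).IsNegInvariant :=
  ⟨by simpa [Measure.neg_def] using gaussianReal_map_neg (μ := 0) (v := v)⟩

theorem integral_norm_le_integral_norm_add {E : Type*} [NormedAddCommGroup E] [NormedSpace ℝ E]
    [MeasurableSpace E] [MeasurableNeg E] {μ : Measure E} [IsFiniteMeasure μ] [μ.IsNegInvariant]
    (hμ : Integrable id μ) (a : E) :
    ∫ t, ‖t‖ ∂μ ≤ ∫ t, ‖a + t‖ ∂μ := by
  have hadd : Integrable (fun t => ‖a + t‖) μ := ((integrable_const a).add hμ).norm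
  have hsub : Integrable (fun t => ‖a - t‖) μ := ((integrable_const a).sub hμ).norm
  have hsymm : ∫ t, ‖a - t‖ ∂μ = ∫ t, ‖a + t‖ ∂μ := by
    simpa [sub_eq_add_neg] using integral_neg_eq_self (fun t => ‖a + t‖) μ
  have htriangle (t : E) : ‖t‖ ≤ (‖a + t‖ + ‖a - t‖) / 2 := by
    have h := norm_sub_le (a + t) (a - t)
    rw [show a + t - (a - t) = (2 : ℝ) • t by module, norm_smul] at h
    norm_num at h
    linarith
  calc ∫ t, ‖t‖ ∂μ ≤ ∫ t, (‖a + t‖ + ‖a - t‖) / 2 ∂μ :=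
        integral_mono hμ.norm ((hadd.add hsub).div_const 2) htriangle
    _ = ∫ t, ‖a + t‖ ∂μ := by
        rw [integral_div, integral_add hadd hsub, hsymm]
        ring

theorem integral_abs_gaussianReal_zero (v : ℝ≥0) :
    ∫ t, |t| ∂gaussianReal 0 v = √(v : ℝ) * ∫ t, |t| ∂gaussianReal 0 1 := by
  have hscale : (gaussianReal 0 1).map (√(v : ℝ) * ·) = gaussianReal 0 v := by
    rw [gaussianReal_map_const_mul, mul_zero, mul_one]
    congr 1
    exact NNReal.eq (by simp)
  rw [← hscale, integral_map (by fun_prop) continuous_abs.aestronglyMeasurable]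
  simp_rw [abs_mul, abs_of_nonneg (Real.sqrt_nonneg _), integral_const_mul]

theorem integral_abs_gaussianReal_zero_one_pos : 0 < ∫ t, |t| ∂gaussianReal 0 1 := by
  have hint : Integrable (fun t : ℝ => |t|) (gaussianReal 0 1) := IsGaussian.integrable_id.abs
  rw [integral_pos_iff_support_of_nonneg abs_nonneg hint]
  have hsupp : Function.support (fun t : ℝ => |t|) = {0}ᶜ := by ext; simp
  have hzero : gaussianReal 0 1 {0} = 0 :=
    gaussianReal_absolutelyContinuous 0 one_ne_zero Real.volume_singleton
  rw [hsupp, prob_compl_eq_one_sub (measurableSet_singleton 0), hzero]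
  simp

theorem sqrt_sum_sq_le_sum_abs {ι : Type*} [Fintype ι] (y : ι → ℝ) :
    √(∑ i, y i ^ 2) ≤ ∑ i, |y i| := by
  refine Real.sqrt_le_iff.2 ⟨Finset.sum_nonneg fun i _ => abs_nonneg _, ?_⟩
  simpa using Finset.sum_sq_le_sq_sum_of_nonneg (s := Finset.univ) (f := fun i => |y i|)
    fun i _ => abs_nonneg _

theorem sum_abs_le_sqrt_card_mul_sqrt_sum_sq {ι : Type*} [Fintype ι] (y : ι → ℝ) :
    ∑ i, |y i| ≤ √(Fintype.card ι) * √(∑ i, y i ^ 2) := by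
  rw [← Real.sqrt_mul (Nat.cast_nonneg _)]
  refine Real.le_sqrt_of_sq_le ?_
  simpa using sq_sum_le_card_mul_sum_sq (s := Finset.univ) (f := fun i => |y i|)

theorem sum_integral_abs_le_sqrt_card_mul_integral_sqrt_sum_sq_add {ι : Type*} [Fintype ι]
    (μ : ι → Measure ℝ) [∀ i, IsProbabilityMeasure (μ i)] [∀ i, (μ i).IsNegInvariant]
    (hμ : ∀ i, Integrable id (μ i)) (x : ι → ℝ) :
    ∑ i, ∫ t, |t| ∂μ i ≤
      √(Fintype.card ι) * ∫ g, √(∑ i, (x i + g i) ^ 2) ∂Measure.pi μ := by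
  have habs₁ (i : ι) : Integrable (fun t => |x i + t|) (μ i) :=
    ((integrable_const _).add (hμ i)).abs
  have habs (i : ι) : Integrable (fun g : ι → ℝ => |x i + g i|) (Measure.pi μ) :=
    integrable_comp_eval (X := fun _ => ℝ) (habs₁ i)
  have hsum : Integrable (fun g : ι → ℝ => ∑ i, |x i + g i|) (Measure.pi μ) :=
    integrable_finsetSum _ fun i _ => habs i
  have hnorm : Integrable (fun g : ι → ℝ => √(∑ i, (x i + g i) ^ 2)) (Measure.pi μ) :=
    hsum.mono' (by fun_prop : Continuous _).aestronglyMeasurable (ae_of_all _ fun g => by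
      rw [Real.norm_of_nonneg (Real.sqrt_nonneg _)]
      exact sqrt_sum_sq_le_sum_abs _)
  calc ∑ i, ∫ t, |t| ∂μ i ≤ ∑ i, ∫ t, |x i + t| ∂μ i :=
        Finset.sum_le_sum fun i _ => integral_norm_le_integral_norm_add (hμ i) (x i)
    _ = ∫ g, ∑ i, |x i + g i| ∂Measure.pi μ := by
        rw [integral_finsetSum _ fun i _ => habs i]
        exact Finset.sum_congr rfl fun i _ =>
          (integral_comp_eval (X := fun _ => ℝ) (habs₁ i).1).symm
    _ ≤ ∫ g, √(Fintype.card ι) * √(∑ i, (x i + g i) ^ 2) ∂Measure.pi μ :=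
        integral_mono hsum (hnorm.const_mul _) fun g => sum_abs_le_sqrt_card_mul_sqrt_sum_sq _
    _ = _ := integral_const_mul _ _

/-- Theorem 1 of the paper: there is an absolute constant `C > 0` such that for
every `D ≥ 1`, every `0 < σ ≤ 1` and every `x ∈ [-1,1]^D`, the smoothed query cost
`√D / E_g[‖x+g‖₂]` of amplitude encoding via fixed-point amplitude amplification is at most
`C/σ`, independently of the dimension `D`. -/
theorem smoothed_amplitude_encoding :
    ∃ C : ℝ, 0 < C ∧
      ∀ (D : ℕ), 1 ≤ D → ∀ σ : ℝ, 0 < σ → σ ≤ 1 →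
        ∀ x : Fin D → ℝ, (∀ i, |x i| ≤ 1) →
          Real.sqrt D / (∫ g, Real.sqrt (∑ i, (x i + g i) ^ 2) ∂(gaussPi D σ)) ≤ C / σ := by
  set K := ∫ t, |t| ∂gaussianReal 0 1
  have hK : 0 < K := integral_abs_gaussianReal_zero_one_pos
  refine ⟨K⁻¹, inv_pos.2 hK, fun D hD σ hσ _ x _ => ?_⟩
  -- instance search does not see through the bare anonymous constructor, so it gets a name
  set v : ℝ≥0 := ⟨σ ^ 2, sq_nonneg σ⟩
  have hsqrt_v : √(v : ℝ) = σ := Real.sqrt_sq hσ.le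
  have hsqrt_D : 0 < √(D : ℝ) := Real.sqrt_pos.2 (by exact_mod_cast hD)
  have hmean : √(D : ℝ) * (σ * K) ≤ ∫ g, √(∑ i, (x i + g i) ^ 2) ∂gaussPi D σ := by
    refine le_of_mul_le_mul_left ?_ hsqrt_D
    rw [← mul_assoc, Real.mul_self_sqrt (Nat.cast_nonneg D)]
    have h := sum_integral_abs_le_sqrt_card_mul_integral_sqrt_sum_sq_add
      (fun _ : Fin D => gaussianReal 0 v) (fun _ => IsGaussian.integrable_id) x
    simp only [integral_abs_gaussianReal_zero v, hsqrt_v, Finset.sum_const, Finset.card_univ,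
      Fintype.card_fin, nsmul_eq_mul] at h
    exact h
  calc √(D : ℝ) / _ ≤ √D / (√D * (σ * K)) :=
        div_le_div_of_nonneg_left hsqrt_D.le (by positivity) hmean
    _ = K⁻¹ / σ := by field_simp
end

section
/- There exists an absolute constant C > 0 such that for all D ≥ 3, all σ > 0, and all x ∈ [-1,1]^D, if g is a random vector in ℝ^D whose coordinates are independent centered Gaussians of variance σ², then D · E[1/‖x + g‖₂²] ≤ C/σ². Consequently the smoothed complexity of classical rejection sampling for ℓ₂-sampling, whose expected runtime on input y is D/‖y‖₂², is O(1/σ²), independent of the dimension D. -/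
open MeasureTheory ProbabilityTheory

/-!
Since `1/s = ∫₀^∞ e^{-st} dt`, Tonelli gives `E ‖x+g‖⁻² = ∫₀^∞ E e^{-t‖x+g‖²} dt`. The inner
expectation factorises over the coordinates, and completing the square bounds each factor by
`(1 + 2σ²t)^{-1/2}` whatever `x` is. Integrating `(1 + 2σ²t)^{-D/2}` over `t > 0` gives
`1/(σ²(D-2))`, and `D/(D-2) ≤ 3` for `D ≥ 3`.
-/

open Real Set Filter Topology
open scoped ENNReal NNReal

lemma lintegral_Ioi_ofReal_eq_of_hasDerivAt_of_nonneg {g g' : ℝ → ℝ} {a L : ℝ}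
    (hderiv : ∀ x ∈ Ici a, HasDerivAt g (g' x) x) (hg' : ∀ x ∈ Ioi a, 0 ≤ g' x)
    (hg : Tendsto g atTop (𝓝 L)) :
    ∫⁻ x in Ioi a, ENNReal.ofReal (g' x) = ENNReal.ofReal (L - g a) := by
  rw [← ofReal_integral_eq_lintegral_ofReal (integrableOn_Ioi_deriv_of_nonneg' hderiv hg' hg)
    ((ae_restrict_iff' measurableSet_Ioi).2 (.of_forall hg')),
    integral_Ioi_of_hasDerivAt_of_nonneg' hderiv hg' hg]

lemma lintegral_Ioi_exp_neg_mul {s : ℝ} (hs : 0 < s) :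
    ∫⁻ t in Ioi 0, ENNReal.ofReal (exp (-s * t)) = ENNReal.ofReal s⁻¹ := by
  rw [← ofReal_integral_eq_lintegral_ofReal (integrableOn_exp_mul_Ioi (neg_neg_of_pos hs) 0)
    (.of_forall fun _ => (exp_pos _).le), integral_exp_mul_Ioi (neg_neg_of_pos hs)]
  simp

/-- At `s = 0` the left side is the junk value `ofReal 0⁻¹ = 0`, which is why no almost-sure
positivity of `‖x + g‖²` is needed below. -/
lemma ofReal_inv_le_lintegral_Ioi_exp_neg_mul {s : ℝ} (hs : 0 ≤ s) :
    ENNReal.ofReal s⁻¹ ≤ ∫⁻ t in Ioi 0, ENNReal.ofReal (exp (-s * t)) := by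
  rcases hs.eq_or_lt with rfl | hs
  · simp
  · rw [lintegral_Ioi_exp_neg_mul hs]

lemma lintegral_Ioi_one_add_mul_rpow_neg {b p : ℝ} (hb : 0 < b) (hp : 1 < p) :
    ∫⁻ t in Ioi 0, ENNReal.ofReal ((1 + b * t) ^ (-p)) = ENNReal.ofReal (b * (p - 1))⁻¹ := by
  have hderiv : ∀ t ∈ Ici (0 : ℝ), HasDerivAt (fun t => -(1 + b * t) ^ (1 - p) / (b * (p - 1)))
      ((1 + b * t) ^ (-p)) t := by
    intro t ht
    have hbase : 0 < 1 + b * t := by nlinarith [ht.out]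
    refine (((((hasDerivAt_id t).const_mul b).const_add 1).rpow_const
      (p := 1 - p) (.inl hbase.ne')).neg.div_const (b * (p - 1))).congr_deriv ?_
    rw [id, sub_sub_cancel_left]
    field_simp [show p - 1 ≠ 0 by linarith]
    ring
  have hlim : Tendsto (fun t => -(1 + b * t) ^ (1 - p) / (b * (p - 1))) atTop (𝓝 0) := by
    have h := (tendsto_rpow_neg_atTop (y := p - 1) (by linarith)).comp
      (tendsto_atTop_add_const_left _ 1 (tendsto_id.const_mul_atTop hb))
    simpa [Function.comp_def, neg_sub] using h.neg.div_const (b * (p - 1))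
  rw [lintegral_Ioi_ofReal_eq_of_hasDerivAt_of_nonneg hderiv
    (fun t ht => rpow_nonneg (by nlinarith [ht.out]) _) hlim]
  simp [neg_div, mul_comm]

lemma lintegral_pi_prod_eq_prod {ι : Type*} [Fintype ι] {E : ι → Type*}
    [∀ i, MeasurableSpace (E i)] {μ : ∀ i, Measure (E i)} [∀ i, IsProbabilityMeasure (μ i)]
    {f : ∀ i, E i → ℝ≥0∞} (hf : ∀ i, Measurable (f i)) :
    ∫⁻ x, ∏ i, f i (x i) ∂Measure.pi μ = ∏ i, ∫⁻ y, f i y ∂μ i := by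
  rw [lintegral_prod_eq_prod_lintegral_of_indepFun _ _
    (iIndepFun_pi fun i => (hf i).aemeasurable) fun i => (hf i).comp (measurable_pi_apply i)]
  exact Finset.prod_congr rfl fun i _ => (measurePreserving_eval μ i).lintegral_comp (hf i)

lemma lintegral_exp_neg_sq_add_mul_gaussianReal_le (v : ℝ≥0) (x : ℝ) {t : ℝ} (ht : 0 ≤ t) :
    ∫⁻ y, ENNReal.ofReal (exp (-(x + y) ^ 2 * t)) ∂gaussianReal 0 v
      ≤ ENNReal.ofReal ((1 + 2 * v * t) ^ (-(1 / 2 : ℝ))) := by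
  rcases eq_or_ne v 0 with rfl | hv
  · simp only [gaussianReal_zero_var, lintegral_dirac, NNReal.coe_zero, mul_zero, zero_mul,
      add_zero, one_rpow]
    exact ENNReal.ofReal_le_ofReal (exp_le_one_iff.2 (by nlinarith [sq_nonneg x]))
  have hv' : (0 : ℝ) < v := by positivity
  set a : ℝ := t + (2 * (v : ℝ))⁻¹ with ha_def
  have ha : 0 < a := by positivity
  have hcomplete : ∀ y, gaussianPDF 0 v y * ENNReal.ofReal (exp (-(x + y) ^ 2 * t))
      ≤ ENNReal.ofReal ((√(2 * π * v))⁻¹ * exp (-a * (y + t * x / a) ^ 2)) := by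
    intro y
    rw [gaussianPDF, gaussianPDFReal, ← ENNReal.ofReal_mul (by positivity), mul_assoc, ← exp_add]
    refine ENNReal.ofReal_le_ofReal (mul_le_mul_of_nonneg_left (exp_le_exp.2 ?_) (by positivity))
    have hsq : -(y - 0) ^ 2 / (2 * v) + -(x + y) ^ 2 * t
        = -a * (y + t * x / a) ^ 2 - t * x ^ 2 / (2 * v * a) := by
      rw [ha_def]
      field_simp
      ring
    rw [hsq]
    linarith [show 0 ≤ t * x ^ 2 / (2 * v * a) by positivity]
  have hgauss : ∫ y, (√(2 * π * v))⁻¹ * exp (-a * (y + t * x / a) ^ 2)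
      = (√(2 * π * v))⁻¹ * √(π / a) := by
    rw [integral_const_mul, integral_add_right_eq_self (fun y => exp (-a * y ^ 2)),
      integral_gaussian]
  have hconst : (√(2 * π * v))⁻¹ * √(π / a) = (1 + 2 * v * t) ^ (-(1 / 2 : ℝ)) := by
    rw [← sqrt_inv, ← sqrt_mul (by positivity), sqrt_eq_rpow, rpow_neg (by positivity),
      ← inv_rpow (by positivity)]
    congr 1
    rw [ha_def]
    field_simp
    ring
  calc ∫⁻ y, ENNReal.ofReal (exp (-(x + y) ^ 2 * t)) ∂gaussianReal 0 v
      = ∫⁻ y, gaussianPDF 0 v y * ENNReal.ofReal (exp (-(x + y) ^ 2 * t)) := by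
        rw [gaussianReal_of_var_ne_zero 0 hv, lintegral_withDensity_eq_lintegral_mul _
          (measurable_gaussianPDF 0 v) (by fun_prop)]
        rfl
    _ ≤ ∫⁻ y, ENNReal.ofReal ((√(2 * π * v))⁻¹ * exp (-a * (y + t * x / a) ^ 2)) :=
        lintegral_mono hcomplete
    _ = ENNReal.ofReal ((1 + 2 * v * t) ^ (-(1 / 2 : ℝ))) := by
        rw [← ofReal_integral_eq_lintegral_ofReal
          (((integrable_exp_neg_mul_sq ha).comp_add_right _).const_mul _)
          (.of_forall fun _ => by positivity), hgauss, hconst]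

lemma lintegral_exp_neg_sum_sq_add_mul_pi_gaussianReal_le {ι : Type*} [Fintype ι] (v : ℝ≥0)
    (x : ι → ℝ) {t : ℝ} (ht : 0 ≤ t) :
    ∫⁻ g, ENNReal.ofReal (exp (-(∑ i, (x i + g i) ^ 2) * t))
        ∂(Measure.pi fun _ => gaussianReal 0 v)
      ≤ ENNReal.ofReal ((1 + 2 * v * t) ^ (-(Fintype.card ι / 2 : ℝ))) := by
  calc ∫⁻ g, ENNReal.ofReal (exp (-(∑ i, (x i + g i) ^ 2) * t))
        ∂(Measure.pi fun _ => gaussianReal 0 v)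
      = ∫⁻ g, ∏ i, ENNReal.ofReal (exp (-(x i + g i) ^ 2 * t))
        ∂(Measure.pi fun _ => gaussianReal 0 v) := by
        simp_rw [← ENNReal.ofReal_prod_of_nonneg fun _ _ => (exp_pos _).le, ← exp_sum,
          ← Finset.sum_mul, ← Finset.sum_neg_distrib]
    _ = ∏ i, ∫⁻ y, ENNReal.ofReal (exp (-(x i + y) ^ 2 * t)) ∂gaussianReal 0 v :=
        lintegral_pi_prod_eq_prod (f := fun i y => ENNReal.ofReal (exp (-(x i + y) ^ 2 * t)))
          fun _ => by fun_prop
    _ ≤ ∏ _i : ι, ENNReal.ofReal ((1 + 2 * v * t) ^ (-(1 / 2 : ℝ))) :=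
        Finset.prod_le_prod' fun i _ => lintegral_exp_neg_sq_add_mul_gaussianReal_le v (x i) ht
    _ = ENNReal.ofReal ((1 + 2 * v * t) ^ (-(Fintype.card ι / 2 : ℝ))) := by
        rw [Finset.prod_const, Finset.card_univ, ← ENNReal.ofReal_pow (by positivity),
          ← rpow_mul_natCast (by positivity)]
        ring_nf

lemma lintegral_inv_sum_sq_add_pi_gaussianReal_le {ι : Type*} [Fintype ι]
    (hι : 2 < Fintype.card ι) {v : ℝ≥0} (hv : v ≠ 0) (x : ι → ℝ) :
    ∫⁻ g, ENNReal.ofReal (∑ i, (x i + g i) ^ 2)⁻¹ ∂(Measure.pi fun _ => gaussianReal 0 v)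
      ≤ ENNReal.ofReal (v * (Fintype.card ι - 2))⁻¹ := by
  have hι' : (2 : ℝ) < Fintype.card ι := by exact_mod_cast hι
  calc ∫⁻ g, ENNReal.ofReal (∑ i, (x i + g i) ^ 2)⁻¹ ∂(Measure.pi fun _ => gaussianReal 0 v)
      ≤ ∫⁻ g, (∫⁻ t in Ioi 0, ENNReal.ofReal (exp (-(∑ i, (x i + g i) ^ 2) * t)))
          ∂(Measure.pi fun _ => gaussianReal 0 v) :=
        lintegral_mono fun g => ofReal_inv_le_lintegral_Ioi_exp_neg_mul (by positivity)
    _ = ∫⁻ t in Ioi 0, ∫⁻ g, ENNReal.ofReal (exp (-(∑ i, (x i + g i) ^ 2) * t))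
          ∂(Measure.pi fun _ => gaussianReal 0 v) :=
        lintegral_lintegral_swap (by fun_prop)
    _ ≤ ∫⁻ t in Ioi 0, ENNReal.ofReal ((1 + 2 * v * t) ^ (-(Fintype.card ι / 2 : ℝ))) :=
        setLIntegral_mono' measurableSet_Ioi fun t ht =>
          lintegral_exp_neg_sum_sq_add_mul_pi_gaussianReal_le v x (le_of_lt ht)
    _ = ENNReal.ofReal (v * (Fintype.card ι - 2))⁻¹ := by
        rw [lintegral_Ioi_one_add_mul_rpow_neg (by positivity) (by linarith)]
        ring_nf

/-- there is an absolute constant `C > 0` such that for every `D ≥ 3`, every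
`σ > 0` and every `x ∈ [-1,1]^D`, the smoothed expected runtime `D · E_g[1/‖x+g‖₂²]` of
classical rejection sampling for `ℓ₂`-sampling is at most `C/σ²`, independently of `D`. -/
theorem smoothed_rejection_sampling :
    ∃ C : ℝ, 0 < C ∧
      ∀ (D : ℕ), 3 ≤ D → ∀ σ : ℝ, 0 < σ →
        ∀ x : Fin D → ℝ, (∀ i, |x i| ≤ 1) →
          (D : ℝ) * (∫ g, (∑ i, (x i + g i) ^ 2)⁻¹ ∂(gaussPi D σ)) ≤ C / σ ^ 2 := by
  refine ⟨3, by norm_num, fun D hD σ hσ x _ => ?_⟩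
  have hD' : (3 : ℝ) ≤ D := by exact_mod_cast hD
  have hD2 : (0 : ℝ) < D - 2 := by linarith
  have hmean : ∫ g, (∑ i, (x i + g i) ^ 2)⁻¹ ∂gaussPi D σ ≤ (σ ^ 2 * (D - 2))⁻¹ := by
    have hv : (⟨σ ^ 2, sq_nonneg σ⟩ : ℝ≥0) ≠ 0 := by simpa [← NNReal.coe_ne_zero] using hσ.ne'
    rw [integral_eq_lintegral_of_nonneg_ae (.of_forall fun g => by positivity)
      (Measurable.aestronglyMeasurable (by fun_prop))]
    refine ENNReal.toReal_le_of_le_ofReal (by positivity) ?_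
    have h := lintegral_inv_sum_sq_add_pi_gaussianReal_le (by rw [Fintype.card_fin]; omega) hv x
    rw [Fintype.card_fin] at h
    exact h
  calc (D : ℝ) * ∫ g, (∑ i, (x i + g i) ^ 2)⁻¹ ∂gaussPi D σ
      ≤ D * (σ ^ 2 * (D - 2))⁻¹ := by gcongr
    _ ≤ 3 / σ ^ 2 := by
        rw [← div_eq_mul_inv, div_le_div_iff₀ (by positivity) (by positivity)]
        nlinarith [mul_nonneg (sq_nonneg σ) (sub_nonneg.2 hD')]
end

section
/- There exists an absolute constant C > 0 such that for all D ≥ 2, all σ > 0, and all x ∈ [-1,1]^D, if g is a random vector in ℝ^D whose coordinates are independent centered Gaussians of variance σ², then √D · E[1/‖x + g‖₂] ≤ C/σ. -/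
open MeasureTheory ProbabilityTheory

/-!
Write `s^{-1/2} = π^{-1/2} ∫₀^∞ t^{-1/2} e^{-st} dt` with `s = ‖x + g‖²` and exchange the
integrals. The coordinates of `g` are independent and `E e^{-t (c + gᵢ)²} ≤ (1 + 2σ²t)^{-1/2}`
for every shift `c`, so `E ‖x + g‖⁻¹ ≤ π^{-1/2} ∫₀^∞ t^{-1/2} (1 + 2σ²t)^{-D/2} dt`.
Below `t = 1/(2σ²)` the factor `(1 + 2σ²t)^{-D/2}` is at most `e^{-Dσ²t/2}`, above it is at most
`(2σ²t)^{-D/2}`; both pieces of the integral are `O(1/(σ√D))`.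
-/

open Real Set

-- Instance search does not unify the variance `⟨σ ^ 2, _⟩` with `gaussianReal`'s argument.
instance isProbabilityMeasure_gaussPi (D : ℕ) (σ : ℝ) : IsProbabilityMeasure (gaussPi D σ) :=
  @Measure.pi.instIsProbabilityMeasure _ _ _ _ _ fun _ => instIsProbabilityMeasureGaussianReal 0 _

theorem lintegral_rpow_neg_half_mul_exp_neg_mul {s : ℝ} (hs : 0 < s) :
    ∫⁻ t in Ioi (0 : ℝ), ENNReal.ofReal (t ^ (-(1 / 2) : ℝ) * exp (-(s * t))) =
      ENNReal.ofReal (√π / √s) := by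
  have h := integral_rpow_mul_exp_neg_mul_Ioi one_half_pos hs
  rw [show (1 / 2 : ℝ) - 1 = -(1 / 2) by norm_num, Gamma_one_half_eq, ← Real.sqrt_eq_rpow,
    one_div s, sqrt_inv] at h
  rw [← ofReal_integral_eq_lintegral_ofReal, h, inv_mul_eq_div]
  · exact Integrable.of_integral_ne_zero (by rw [h]; positivity)
  · filter_upwards [ae_restrict_mem measurableSet_Ioi] with t (ht : 0 < t)
    positivity

theorem ofReal_inv_sqrt_le_lintegral {s : ℝ} (hs : 0 ≤ s) :
    ENNReal.ofReal (√s)⁻¹ ≤ ENNReal.ofReal (√π)⁻¹ *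
      ∫⁻ t in Ioi (0 : ℝ), ENNReal.ofReal (t ^ (-(1 / 2) : ℝ) * exp (-(s * t))) := by
  rcases hs.eq_or_lt with rfl | hs
  · simp
  rw [lintegral_rpow_neg_half_mul_exp_neg_mul hs, ← ENNReal.ofReal_mul (by positivity),
    inv_mul_eq_div, div_div_cancel_left' (by positivity)]

theorem lintegral_ofReal_inv_sqrt_le {α : Type*} [MeasurableSpace α] (μ : Measure α) [SFinite μ]
    {S : α → ℝ} (hS : Measurable S) (hS0 : ∀ a, 0 ≤ S a) :
    (∫⁻ a, ENNReal.ofReal (√(S a))⁻¹ ∂μ) ≤ ENNReal.ofReal (√π)⁻¹ *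
      ∫⁻ t in Ioi (0 : ℝ), ENNReal.ofReal (t ^ (-(1 / 2) : ℝ)) *
        (∫⁻ a, ENNReal.ofReal (exp (-(S a * t))) ∂μ) := by
  calc ∫⁻ a, ENNReal.ofReal (√(S a))⁻¹ ∂μ
      ≤ ∫⁻ a, ENNReal.ofReal (√π)⁻¹ *
          (∫⁻ t in Ioi (0 : ℝ), ENNReal.ofReal (t ^ (-(1 / 2) : ℝ) * exp (-(S a * t)))) ∂μ :=
        lintegral_mono fun a => ofReal_inv_sqrt_le_lintegral (hS0 a)
    _ = ENNReal.ofReal (√π)⁻¹ * ∫⁻ t in Ioi (0 : ℝ),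
          (∫⁻ a, ENNReal.ofReal (t ^ (-(1 / 2) : ℝ) * exp (-(S a * t))) ∂μ) := by
        rw [lintegral_const_mul' _ _ ENNReal.ofReal_ne_top, lintegral_lintegral_swap]
        exact (Measurable.ennreal_ofReal (by fun_prop)).aemeasurable
    _ = _ := by
        congr 1
        refine setLIntegral_congr_fun measurableSet_Ioi fun t (ht : 0 < t) => ?_
        simp_rw [ENNReal.ofReal_mul (by positivity : 0 ≤ t ^ (-(1 / 2) : ℝ))]
        exact lintegral_const_mul' _ _ ENNReal.ofReal_ne_top

-- Completing the square in the exponent; the discarded factor is `exp (-m²t / (1 + 2vt)) ≤ 1`.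
theorem gaussianPDFReal_mul_exp_neg_sq_mul_le (m : ℝ) {v : NNReal} (hv : v ≠ 0) {t : ℝ}
    (ht : 0 ≤ t) (y : ℝ) :
    gaussianPDFReal m v y * exp (-(y ^ 2 * t)) ≤ (√(1 + 2 * v * t))⁻¹ *
      gaussianPDFReal (m / (1 + 2 * v * t)) (v / (1 + 2 * v * t)).toNNReal y := by
  have hv : (0 : ℝ) < v := by positivity
  set a := 1 + 2 * (v : ℝ) * t with ha
  have ha0 : 0 < a := by positivity
  have hexp : -(y - m) ^ 2 / (2 * v) + -(y ^ 2 * t) + m ^ 2 * t / a =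
      -(y - m / a) ^ 2 / (2 * (v / a)) := by
    rw [ha]; field_simp; ring
  have hpre : (√a)⁻¹ * (√(2 * π * (v / a)))⁻¹ = (√(2 * π * v))⁻¹ := by
    rw [← mul_inv, ← sqrt_mul ha0.le]
    field_simp
  simp only [gaussianPDFReal, Real.coe_toNNReal _ (by positivity : 0 ≤ (v : ℝ) / a)]
  rw [← mul_assoc, hpre, mul_assoc, ← exp_add, ← hexp]
  exact mul_le_mul_of_nonneg_left (exp_le_exp.2 (le_add_of_nonneg_right (by positivity)))
    (by positivity)

theorem integral_exp_neg_sq_mul_gaussianReal_le (m : ℝ) {v : NNReal} (hv : v ≠ 0) {t : ℝ}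
    (ht : 0 ≤ t) :
    ∫ y, exp (-(y ^ 2 * t)) ∂gaussianReal m v ≤ (√(1 + 2 * v * t))⁻¹ := by
  have hv' : (v / (1 + 2 * v * t)).toNNReal ≠ 0 := by
    have : (0 : ℝ) < v := by positivity
    simp only [ne_eq, Real.toNNReal_eq_zero, not_le]
    positivity
  rw [integral_gaussianReal_eq_integral_smul hv]
  calc ∫ y, gaussianPDFReal m v y • exp (-(y ^ 2 * t))
      ≤ ∫ y, (√(1 + 2 * v * t))⁻¹ *
          gaussianPDFReal (m / (1 + 2 * v * t)) (v / (1 + 2 * v * t)).toNNReal y :=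
        integral_mono_of_nonneg (ae_of_all _ fun y =>
          mul_nonneg (gaussianPDFReal_nonneg _ _ _) (exp_pos _).le)
          ((integrable_gaussianPDFReal _ _).const_mul _)
          (ae_of_all _ (gaussianPDFReal_mul_exp_neg_sq_mul_le m hv ht))
    _ = (√(1 + 2 * v * t))⁻¹ := by
        rw [integral_const_mul, integral_gaussianPDFReal_eq_one _ hv', mul_one]

theorem lintegral_exp_neg_sum_sq_mul_gaussPi_le {D : ℕ} {σ : ℝ} (hσ : σ ≠ 0) (x : Fin D → ℝ)
    {t : ℝ} (ht : 0 ≤ t) :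
    ∫⁻ g, ENNReal.ofReal (exp (-((∑ i, (x i + g i) ^ 2) * t))) ∂gaussPi D σ ≤
      ENNReal.ofReal ((1 + 2 * σ ^ 2 * t) ^ (-(D / 2 : ℝ))) := by
  set v : NNReal := ⟨σ ^ 2, sq_nonneg σ⟩
  have hv : v ≠ 0 := by rw [ne_eq, ← NNReal.coe_eq_zero]; exact pow_ne_zero 2 hσ
  have hfactor (c : ℝ) : ∫ y, exp (-((c + y) ^ 2 * t)) ∂gaussianReal 0 v ≤
      (√(1 + 2 * σ ^ 2 * t))⁻¹ := by
    have hmap := integral_map (μ := gaussianReal 0 v) (measurable_const_add c).aemeasurable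
      (f := fun z => exp (-(z ^ 2 * t))) (by fun_prop)
    rw [gaussianReal_map_const_add, zero_add] at hmap
    exact hmap ▸ integral_exp_neg_sq_mul_gaussianReal_le c hv ht
  rw [← ofReal_integral_eq_lintegral_ofReal, ENNReal.ofReal_le_ofReal_iff (by positivity)]
  · calc ∫ g, exp (-((∑ i, (x i + g i) ^ 2) * t)) ∂gaussPi D σ
        = ∏ i, ∫ y, exp (-((x i + y) ^ 2 * t)) ∂gaussianReal 0 v := by
          rw [gaussPi, ← integral_fintype_prod_eq_prod]
          simp_rw [Finset.sum_mul, ← Finset.sum_neg_distrib, exp_sum]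
          rfl
      _ ≤ ∏ _i : Fin D, (√(1 + 2 * σ ^ 2 * t))⁻¹ :=
          Finset.prod_le_prod (fun i _ => integral_nonneg fun y => (exp_pos _).le)
            fun i _ => hfactor (x i)
      _ = (1 + 2 * σ ^ 2 * t) ^ (-(D / 2 : ℝ)) := by
          rw [Finset.prod_const, Finset.card_univ, Fintype.card_fin, Real.sqrt_eq_rpow,
            ← rpow_neg (by positivity), ← rpow_mul_natCast (by positivity)]
          ring_nf
  · refine (integrable_const (1 : ℝ)).mono' (Measurable.aestronglyMeasurable (by fun_prop))
      (ae_of_all _ fun g => ?_)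
    rw [norm_of_nonneg (exp_pos _).le, exp_le_one_iff, neg_nonpos]
    positivity
  · exact ae_of_all _ fun g => (exp_pos _).le

theorem exp_half_le_one_add {u : ℝ} (h0 : 0 ≤ u) (h2 : u ≤ 2) : exp (u / 2) ≤ 1 + u := by
  have h := abs_sub_le_iff.1 <|
    abs_exp_sub_one_sub_id_le (x := u / 2) (by rw [abs_le]; constructor <;> linarith)
  nlinarith [h.1]

theorem one_add_rpow_neg_le_exp {u p : ℝ} (h0 : 0 ≤ u) (h2 : u ≤ 2) (hp : 0 ≤ p) :
    (1 + u) ^ (-p) ≤ exp (-(p * u / 2)) := by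
  rw [show -(p * u / 2) = u / 2 * -p by ring, exp_mul]
  exact rpow_le_rpow_of_nonpos (exp_pos _) (exp_half_le_one_add h0 h2) (neg_nonpos.2 hp)

theorem setLIntegral_Ioc_rpow_neg_half_mul_one_add_mul_rpow_le {w p : ℝ} (hw : 0 < w)
    (hp : 0 < p) :
    ∫⁻ t in Ioc 0 w⁻¹, ENNReal.ofReal (t ^ (-(1 / 2) : ℝ) * (1 + w * t) ^ (-p)) ≤
      ENNReal.ofReal (√π / √(p * w / 2)) := by
  calc ∫⁻ t in Ioc 0 w⁻¹, ENNReal.ofReal (t ^ (-(1 / 2) : ℝ) * (1 + w * t) ^ (-p))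
      ≤ ∫⁻ t in Ioc 0 w⁻¹, ENNReal.ofReal (t ^ (-(1 / 2) : ℝ) * exp (-(p * w / 2 * t))) := by
        refine setLIntegral_mono' measurableSet_Ioc fun t ⟨_, htw⟩ => ?_
        have hwt : w * t ≤ 1 := by
          simpa [hw.ne'] using mul_le_mul_of_nonneg_left htw hw.le
        gcongr
        rw [show p * w / 2 * t = p * (w * t) / 2 by ring]
        exact one_add_rpow_neg_le_exp (by positivity) (by linarith) hp.le
    _ ≤ ∫⁻ t in Ioi 0, ENNReal.ofReal (t ^ (-(1 / 2) : ℝ) * exp (-(p * w / 2 * t))) :=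
        lintegral_mono_set Ioc_subset_Ioi_self
    _ = ENNReal.ofReal (√π / √(p * w / 2)) :=
        lintegral_rpow_neg_half_mul_exp_neg_mul (by positivity)

theorem setLIntegral_Ioi_rpow_neg_half_mul_one_add_mul_rpow_le {w p : ℝ} (hw : 0 < w)
    (hp : 1 / 2 < p) :
    ∫⁻ t in Ioi w⁻¹, ENNReal.ofReal (t ^ (-(1 / 2) : ℝ) * (1 + w * t) ^ (-p)) ≤
      ENNReal.ofReal ((√w)⁻¹ / (p - 1 / 2)) := by
  have hexp : -(p + 1 / 2) < -1 := by linarith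
  calc ∫⁻ t in Ioi w⁻¹, ENNReal.ofReal (t ^ (-(1 / 2) : ℝ) * (1 + w * t) ^ (-p))
      ≤ ∫⁻ t in Ioi w⁻¹, ENNReal.ofReal (w ^ (-p) * t ^ (-(p + 1 / 2))) := by
        refine setLIntegral_mono' measurableSet_Ioi fun t (ht : w⁻¹ < t) => ?_
        have ht0 : 0 < t := (inv_pos.2 hw).trans ht
        rw [show -(p + 1 / 2) = -(1 / 2) + -p by ring, rpow_add ht0, mul_left_comm,
          ← mul_rpow hw.le ht0.le]
        exact ENNReal.ofReal_le_ofReal (mul_le_mul_of_nonneg_left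
          (rpow_le_rpow_of_nonpos (by positivity) (by linarith) (by linarith)) (by positivity))
    _ = ENNReal.ofReal (w ^ (-p) * ∫ t in Ioi w⁻¹, t ^ (-(p + 1 / 2))) := by
        rw [← integral_const_mul, ofReal_integral_eq_lintegral_ofReal]
        · exact (integrableOn_Ioi_rpow_of_lt hexp (inv_pos.2 hw)).const_mul _
        · filter_upwards [ae_restrict_mem measurableSet_Ioi] with t (ht : w⁻¹ < t)
          have ht0 : 0 < t := (inv_pos.2 hw).trans ht
          positivity
    _ = ENNReal.ofReal ((√w)⁻¹ / (p - 1 / 2)) := by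
        rw [integral_Ioi_rpow_of_lt hexp (inv_pos.2 hw), inv_rpow hw.le, ← rpow_neg hw.le,
          Real.sqrt_eq_rpow, ← rpow_neg hw.le, show -(p + 1 / 2) + 1 = -(p - 1 / 2) by ring,
          neg_neg, neg_div_neg_eq, ← mul_div_assoc, ← rpow_add hw, show -p + (p - 1 / 2) = -(1 / 2) by ring]

theorem sqrt_pi_div_add_inv_sqrt_div_le {w p : ℝ} (hw : 0 < w) (hp : 1 ≤ p) :
    √π / √(p * w / 2) + (√w)⁻¹ / (p - 1 / 2) ≤ 5 / √(p * w) := by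
  have hpw : 0 < √(p * w) := sqrt_pos.2 (by nlinarith)
  have hpi : √(2 * π) ≤ 3 := by
    rw [show (3 : ℝ) = √9 by rw [show (9 : ℝ) = 3 ^ 2 by norm_num, sqrt_sq (by norm_num)]]
    exact sqrt_le_sqrt (by linarith [pi_lt_four])
  have hhead : √π / √(p * w / 2) = √(2 * π) / √(p * w) := by
    rw [sqrt_div' _ zero_le_two, sqrt_mul zero_le_two π]
    field_simp
  have htail : (√w)⁻¹ / (p - 1 / 2) ≤ 2 / √(p * w) := by
    have hsp : √p ≤ p := by nlinarith [sq_sqrt (show 0 ≤ p by linarith), sqrt_nonneg p]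
    have hw' : 0 < √w := sqrt_pos.2 hw
    rw [div_le_div_iff₀ (by linarith) hpw, sqrt_mul (by linarith)]
    field_simp
    nlinarith
  calc √π / √(p * w / 2) + (√w)⁻¹ / (p - 1 / 2)
      ≤ 3 / √(p * w) + 2 / √(p * w) := by rw [hhead]; gcongr
    _ = 5 / √(p * w) := by ring

theorem lintegral_rpow_neg_half_mul_one_add_mul_rpow_le {w p : ℝ} (hw : 0 < w) (hp : 1 ≤ p) :
    ∫⁻ t in Ioi 0, ENNReal.ofReal (t ^ (-(1 / 2) : ℝ) * (1 + w * t) ^ (-p)) ≤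
      ENNReal.ofReal (5 / √(p * w)) := by
  rw [← Ioc_union_Ioi_eq_Ioi (inv_pos.2 hw).le,
    lintegral_union measurableSet_Ioi (Ioc_disjoint_Ioi le_rfl)]
  calc _ ≤ ENNReal.ofReal (√π / √(p * w / 2)) + ENNReal.ofReal ((√w)⁻¹ / (p - 1 / 2)) :=
        add_le_add (setLIntegral_Ioc_rpow_neg_half_mul_one_add_mul_rpow_le hw (by linarith))
          (setLIntegral_Ioi_rpow_neg_half_mul_one_add_mul_rpow_le hw (by linarith))
    _ = ENNReal.ofReal (√π / √(p * w / 2) + (√w)⁻¹ / (p - 1 / 2)) :=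
        (ENNReal.ofReal_add (by positivity) (div_nonneg (by positivity) (by linarith))).symm
    _ ≤ ENNReal.ofReal (5 / √(p * w)) :=
        ENNReal.ofReal_le_ofReal (sqrt_pi_div_add_inv_sqrt_div_le hw hp)

theorem lintegral_inv_sqrt_sum_sq_gaussPi_le {D : ℕ} (hD : 2 ≤ D) {σ : ℝ} (hσ : 0 < σ)
    (x : Fin D → ℝ) :
    ∫⁻ g, ENNReal.ofReal (√(∑ i, (x i + g i) ^ 2))⁻¹ ∂gaussPi D σ ≤
      ENNReal.ofReal ((√π)⁻¹ * (5 / √(D / 2 * (2 * σ ^ 2)))) := by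
  have hp : (1 : ℝ) ≤ D / 2 := by rw [le_div_iff₀ two_pos]; exact_mod_cast hD
  calc ∫⁻ g, ENNReal.ofReal (√(∑ i, (x i + g i) ^ 2))⁻¹ ∂gaussPi D σ
      ≤ ENNReal.ofReal (√π)⁻¹ * ∫⁻ t in Ioi (0 : ℝ), ENNReal.ofReal (t ^ (-(1 / 2) : ℝ)) *
          (∫⁻ g, ENNReal.ofReal (exp (-((∑ i, (x i + g i) ^ 2) * t))) ∂gaussPi D σ) :=
        lintegral_ofReal_inv_sqrt_le _ (by fun_prop) fun g => by positivity
    _ ≤ ENNReal.ofReal (√π)⁻¹ * ∫⁻ t in Ioi (0 : ℝ),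
          ENNReal.ofReal (t ^ (-(1 / 2) : ℝ) * (1 + 2 * σ ^ 2 * t) ^ (-(D / 2 : ℝ))) := by
        refine mul_le_mul_right (setLIntegral_mono' measurableSet_Ioi fun t (ht : 0 < t) => ?_) _
        rw [ENNReal.ofReal_mul (by positivity)]
        exact mul_le_mul_right (lintegral_exp_neg_sum_sq_mul_gaussPi_le hσ.ne' x ht.le) _
    _ ≤ ENNReal.ofReal (√π)⁻¹ * ENNReal.ofReal (5 / √(D / 2 * (2 * σ ^ 2))) :=
        mul_le_mul_right (lintegral_rpow_neg_half_mul_one_add_mul_rpow_le (by positivity) hp) _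
    _ = ENNReal.ofReal ((√π)⁻¹ * (5 / √(D / 2 * (2 * σ ^ 2)))) :=
        (ENNReal.ofReal_mul (by positivity)).symm

/-- there is an absolute constant `C > 0` such that for all `D ≥ 2`, all
`σ > 0` and all `x ∈ [-1,1]^D`, the smoothed expected amplitude-amplification query count
satisfies `√D · E_g[1/‖x+g‖₂] ≤ C/σ`. -/
theorem smoothed_expected_query_count :
    ∃ C : ℝ, 0 < C ∧
      ∀ (D : ℕ), 2 ≤ D → ∀ σ : ℝ, 0 < σ →
        ∀ x : Fin D → ℝ, (∀ i, |x i| ≤ 1) →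
          Real.sqrt D * (∫ g, (Real.sqrt (∑ i, (x i + g i) ^ 2))⁻¹ ∂(gaussPi D σ)) ≤
            C / σ := by
  refine ⟨5, by norm_num, fun D hD σ hσ x _ => ?_⟩
  have hscale : √(D / 2 * (2 * σ ^ 2)) = σ * √D := by
    rw [show (D : ℝ) / 2 * (2 * σ ^ 2) = σ ^ 2 * D by ring, sqrt_mul (sq_nonneg σ),
      sqrt_sq hσ.le]
  have hπ : 1 ≤ √π := by
    rw [show (1 : ℝ) = √1 from sqrt_one.symm]; exact sqrt_le_sqrt (by linarith [pi_gt_three])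
  rw [integral_eq_lintegral_of_nonneg_ae (ae_of_all _ fun g => by positivity)
    (Measurable.aestronglyMeasurable (by fun_prop))]
  have hbound := ENNReal.toReal_le_of_le_ofReal (by positivity)
    (lintegral_inv_sqrt_sum_sq_gaussPi_le hD hσ x)
  calc √D * _ ≤ √D * ((√π)⁻¹ * (5 / √(D / 2 * (2 * σ ^ 2)))) := by gcongr
    _ = (√π)⁻¹ * (5 / σ) := by rw [hscale]; field_simp
    _ ≤ 5 / σ := mul_le_of_le_one_left (by positivity) (inv_le_one_of_one_le₀ hπ)
end
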